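/- Let V₀ be the 5×5 diagonal matrix diag(3,2,2,1,0). Then the matrix commutators satisfy [V₀,Vₓ] = Vₓ, [V₀,V_y] = V_y, [V₀,V₂] = 2·V₂ and [V₀,V₃] = 3·V₃; consequently the real span of {V₀, Vₓ, V_y, V₂, V₃} is a 5-dimensional real Lie subalgebra of the 5×5 complex matrices on which V₀ acts as a grading element with the generators Vₓ, V_y, V₂, V₃ of degrees 1, 1, 2, 3 respectively. -/
import Mathlib


open Complex

/-- The matrix `Vₓ`. -/
noncomputable def Vxm : Matrix (Fin 5) (Fin 5) ℂ :=
  !![0, 1, I / 2, 0, 0;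
     0, 0, 0, I, 0;
     0, 0, 0, 1, 0;
     0, 0, 0, 0, 1 / 2;
     0, 0, 0, 0, 0]

/-- The matrix `V_y`. -/
noncomputable def Vym : Matrix (Fin 5) (Fin 5) ℂ :=
  !![0, 0, -(1 / 2), 0, 0;
     0, 0, 0, -1, 0;
     0, 0, 0, -I, 0;
     0, 0, 0, 0, -(I / 2);
     0, 0, 0, 0, 0]

/-- The matrix commutator `[A,B] = AB − BA`. -/
noncomputable def matBr (A B : Matrix (Fin 5) (Fin 5) ℂ) : Matrix (Fin 5) (Fin 5) ℂ :=
  A * B - B * A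

noncomputable def V2m : Matrix (Fin 5) (Fin 5) ℂ := matBr Vxm Vym

noncomputable def V3m : Matrix (Fin 5) (Fin 5) ℂ := matBr Vxm V2m

/-- The grading element `V₀ = diag(3,2,2,1,0)`. -/
noncomputable def V0m : Matrix (Fin 5) (Fin 5) ℂ := Matrix.diagonal ![3, 2, 2, 1, 0]

/- Auxiliary material. -/

noncomputable def E2l : Matrix (Fin 5) (Fin 5) ℂ :=
  !![0,0,0,0,0; 0,0,0,0,1; 0,0,0,0,0; 0,0,0,0,0; 0,0,0,0,0]
noncomputable def E3l : Matrix (Fin 5) (Fin 5) ℂ :=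
  !![0,0,0,0,1; 0,0,0,0,0; 0,0,0,0,0; 0,0,0,0,0; 0,0,0,0,0]

set_option maxHeartbeats 1000000 in
lemma hV2 : V2m = E2l := by
  show Vxm * Vym - Vym * Vxm = _
  rw [Vxm, Vym, E2l]
  ext i j
  fin_cases i <;> fin_cases j <;>
    simp [Matrix.mul_apply, Fin.sum_univ_five, Matrix.sub_apply,
      Matrix.vecHead, Matrix.vecTail] <;>
    ring_nf <;> simp [Complex.I_sq] <;> ring_nf

set_option maxHeartbeats 1000000 in
lemma hV3 : V3m = E3l := by
  show Vxm * V2m - V2m * Vxm = _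
  rw [hV2, Vxm, E2l, E3l]
  ext i j
  fin_cases i <;> fin_cases j <;>
    simp [Matrix.mul_apply, Fin.sum_univ_five, Matrix.sub_apply,
      Matrix.vecHead, Matrix.vecTail]

lemma br0x : matBr V0m Vxm = Vxm := by
  show V0m * Vxm - Vxm * V0m = _
  ext i j
  fin_cases i <;> fin_cases j <;>
    simp [V0m, Vxm, Matrix.diagonal_mul, Matrix.mul_diagonal, Matrix.sub_apply,
      Matrix.vecHead, Matrix.vecTail, -Matrix.cons_mul] <;> ring

lemma br0y : matBr V0m Vym = Vym := by
  show V0m * Vym - Vym * V0m = _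
  ext i j
  fin_cases i <;> fin_cases j <;>
    simp [V0m, Vym, Matrix.diagonal_mul, Matrix.mul_diagonal, Matrix.sub_apply,
      Matrix.vecHead, Matrix.vecTail, -Matrix.cons_mul] <;> ring

lemma br02 : matBr V0m V2m = (2 : ℝ) • V2m := by
  show V0m * V2m - V2m * V0m = _
  rw [hV2]
  ext i j
  fin_cases i <;> fin_cases j <;>
    simp [V0m, E2l, Matrix.diagonal_mul, Matrix.mul_diagonal, Matrix.sub_apply,
      Matrix.smul_apply, Matrix.vecHead, Matrix.vecTail, -Matrix.cons_mul] <;> norm_num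

lemma br03 : matBr V0m V3m = (3 : ℝ) • V3m := by
  show V0m * V3m - V3m * V0m = _
  rw [hV3]
  ext i j
  fin_cases i <;> fin_cases j <;>
    simp [V0m, E3l, Matrix.diagonal_mul, Matrix.mul_diagonal, Matrix.sub_apply,
      Matrix.smul_apply, Matrix.vecHead, Matrix.vecTail, -Matrix.cons_mul] <;> norm_num

set_option maxHeartbeats 1000000 in
lemma brx3 : matBr Vxm V3m = 0 := by
  show Vxm * V3m - V3m * Vxm = _
  rw [hV3, Vxm, E3l]
  ext i j
  fin_cases i <;> fin_cases j <;>
    simp [Matrix.mul_apply, Fin.sum_univ_five, Matrix.sub_apply,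
      Matrix.vecHead, Matrix.vecTail]

set_option maxHeartbeats 1000000 in
lemma bry2 : matBr Vym V2m = 0 := by
  show Vym * V2m - V2m * Vym = _
  rw [hV2, Vym, E2l]
  ext i j
  fin_cases i <;> fin_cases j <;>
    simp [Matrix.mul_apply, Fin.sum_univ_five, Matrix.sub_apply,
      Matrix.vecHead, Matrix.vecTail]

set_option maxHeartbeats 1000000 in
lemma bry3 : matBr Vym V3m = 0 := by
  show Vym * V3m - V3m * Vym = _
  rw [hV3, Vym, E3l]
  ext i j
  fin_cases i <;> fin_cases j <;>
    simp [Matrix.mul_apply, Fin.sum_univ_five, Matrix.sub_apply,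
      Matrix.vecHead, Matrix.vecTail]

set_option maxHeartbeats 1000000 in
lemma br23 : matBr V2m V3m = 0 := by
  show V2m * V3m - V3m * V2m = _
  rw [hV2, hV3, E2l, E3l]
  ext i j
  fin_cases i <;> fin_cases j <;>
    simp [Matrix.mul_apply, Fin.sum_univ_five, Matrix.sub_apply,
      Matrix.vecHead, Matrix.vecTail]

lemma matBr_rev (A B) : matBr B A = -matBr A B := by simp [matBr]
lemma matBr_self (A) : matBr A A = 0 := by simp [matBr]
lemma matBr_add_left (a b c) : matBr (a + b) c = matBr a c + matBr b c := by
  simp only [matBr, add_mul, mul_add]; abel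
lemma matBr_add_right (a b c) : matBr a (b + c) = matBr a b + matBr a c := by
  simp only [matBr, add_mul, mul_add]; abel
lemma matBr_smul_left (r : ℝ) (a b) : matBr (r • a) b = r • matBr a b := by
  simp [matBr, smul_sub, smul_mul_assoc, mul_smul_comm]
lemma matBr_smul_right (r : ℝ) (a b) : matBr a (r • b) = r • matBr a b := by
  simp [matBr, smul_sub, smul_mul_assoc, mul_smul_comm]

noncomputable def sSet : Set (Matrix (Fin 5) (Fin 5) ℂ) := {V0m, Vxm, Vym, V2m, V3m}
noncomputable def SS : Submodule ℝ (Matrix (Fin 5) (Fin 5) ℂ) := Submodule.span ℝ sSet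

lemma hm0 : V0m ∈ SS := Submodule.subset_span (Set.mem_insert _ _)
lemma hmx : Vxm ∈ SS :=
  Submodule.subset_span (Set.mem_insert_of_mem _ (Set.mem_insert _ _))
lemma hmy : Vym ∈ SS :=
  Submodule.subset_span (Set.mem_insert_of_mem _ (Set.mem_insert_of_mem _ (Set.mem_insert _ _)))
lemma hm2 : V2m ∈ SS :=
  Submodule.subset_span (Set.mem_insert_of_mem _ (Set.mem_insert_of_mem _
    (Set.mem_insert_of_mem _ (Set.mem_insert _ _))))
lemma hm3 : V3m ∈ SS :=
  Submodule.subset_span (Set.mem_insert_of_mem _ (Set.mem_insert_of_mem _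
    (Set.mem_insert_of_mem _ (Set.mem_insert_of_mem _ rfl))))

lemma key : ∀ x ∈ sSet, ∀ y ∈ sSet, matBr x y ∈ SS := by
  intro x hx y hy
  simp only [sSet, Set.mem_insert_iff, Set.mem_singleton_iff] at hx hy
  rcases hx with rfl|rfl|rfl|rfl|rfl <;> rcases hy with rfl|rfl|rfl|rfl|rfl
  · rw [matBr_self]; exact SS.zero_mem
  · rw [br0x]; exact hmx
  · rw [br0y]; exact hmy
  · rw [br02]; exact SS.smul_mem _ hm2
  · rw [br03]; exact SS.smul_mem _ hm3
  · rw [matBr_rev, br0x]; exact SS.neg_mem hmx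
  · rw [matBr_self]; exact SS.zero_mem
  · exact hm2
  · exact hm3
  · rw [brx3]; exact SS.zero_mem
  · rw [matBr_rev, br0y]; exact SS.neg_mem hmy
  · rw [matBr_rev]; exact SS.neg_mem hm2
  · rw [matBr_self]; exact SS.zero_mem
  · rw [bry2]; exact SS.zero_mem
  · rw [bry3]; exact SS.zero_mem
  · rw [matBr_rev, br02]; exact SS.neg_mem (SS.smul_mem _ hm2)
  · rw [matBr_rev]; exact SS.neg_mem hm3
  · rw [matBr_rev, bry2, neg_zero]; exact SS.zero_mem
  · rw [matBr_self]; exact SS.zero_mem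
  · rw [br23]; exact SS.zero_mem
  · rw [matBr_rev, br03]; exact SS.neg_mem (SS.smul_mem _ hm3)
  · rw [matBr_rev, brx3, neg_zero]; exact SS.zero_mem
  · rw [matBr_rev, bry3, neg_zero]; exact SS.zero_mem
  · rw [matBr_rev, br23, neg_zero]; exact SS.zero_mem
  · rw [matBr_self]; exact SS.zero_mem

lemma brClosure : ∀ A ∈ SS, ∀ B ∈ SS, matBr A B ∈ SS := by
  have h1 : ∀ x ∈ sSet, ∀ B ∈ SS, matBr x B ∈ SS := by
    intro x hx B hB
    induction hB using Submodule.span_induction with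
    | mem y hy => exact key x hx y hy
    | zero => rw [show matBr x 0 = 0 by simp [matBr]]; exact SS.zero_mem
    | add y z _ _ hy hz => rw [matBr_add_right]; exact SS.add_mem hy hz
    | smul r y _ hy => rw [matBr_smul_right]; exact SS.smul_mem r hy
  intro A hA B hB
  induction hA using Submodule.span_induction with
  | mem x hx => exact h1 x hx B hB
  | zero => rw [show matBr 0 B = 0 by simp [matBr]]; exact SS.zero_mem
  | add x y _ _ hx hy => rw [matBr_add_left]; exact SS.add_mem hx hy
  | smul r x _ hx => rw [matBr_smul_left]; exact SS.smul_mem r hx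

noncomputable def fam : Fin 5 → Matrix (Fin 5) (Fin 5) ℂ := ![V0m, Vxm, Vym, V2m, V3m]

lemma hrange : Set.range fam = sSet := by
  rw [fam, sSet]
  simp only [Matrix.range_cons, Matrix.range_empty, Set.union_empty, Set.singleton_union]

lemma hLI : LinearIndependent ℝ fam := by
  rw [Fintype.linearIndependent_iff]
  intro g hg
  rw [fam] at hg
  simp only [Fin.sum_univ_five, Matrix.cons_val_zero, Matrix.cons_val_one, Matrix.head_cons,
    Matrix.cons_val_two, Matrix.tail_cons, Matrix.cons_val_three, Matrix.cons_val_four] at hg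
  have ent : ∀ i j : Fin 5, g 0 • V0m i j + g 1 • Vxm i j + g 2 • Vym i j
      + g 3 • V2m i j + g 4 • V3m i j = 0 := by
    intro i j
    have := congrFun (congrFun hg i) j
    simpa [Matrix.add_apply, Matrix.smul_apply] using this
  have h0 : g 0 = 0 := by
    have := ent 0 0
    simp [V0m, Vxm, Vym, hV2, hV3, E2l, E3l, Matrix.diagonal, Complex.real_smul,
      Matrix.vecHead, Matrix.vecTail] at this
    exact_mod_cast this
  have h1 : g 1 = 0 := by
    have := ent 0 1
    simp [V0m, Vxm, Vym, hV2, hV3, E2l, E3l, Matrix.diagonal, Complex.real_smul,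
      Matrix.vecHead, Matrix.vecTail] at this
    exact_mod_cast this
  have h2 : g 2 = 0 := by
    have := ent 0 2
    simp [V0m, Vxm, Vym, hV2, hV3, E2l, E3l, Matrix.diagonal, Complex.real_smul, h1,
      Matrix.vecHead, Matrix.vecTail] at this
    exact_mod_cast this
  have h3 : g 3 = 0 := by
    have := ent 1 4
    simp [V0m, Vxm, Vym, hV2, hV3, E2l, E3l, Matrix.diagonal, Complex.real_smul,
      Matrix.vecHead, Matrix.vecTail] at this
    exact_mod_cast this
  have h4 : g 4 = 0 := by
    have := ent 0 4
    simp [V0m, Vxm, Vym, hV2, hV3, E2l, E3l, Matrix.diagonal, Complex.real_smul,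
      Matrix.vecHead, Matrix.vecTail] at this
    exact_mod_cast this
  intro i; fin_cases i <;> assumption

lemma hfr : Module.finrank ℝ SS = 5 := by
  rw [SS, ← hrange, finrank_span_eq_card hLI]
  simp

theorem stmt_8 :
    matBr V0m Vxm = Vxm ∧ matBr V0m Vym = Vym ∧
    matBr V0m V2m = (2 : ℝ) • V2m ∧ matBr V0m V3m = (3 : ℝ) • V3m ∧
    (∀ A ∈ Submodule.span ℝ ({V0m, Vxm, Vym, V2m, V3m} : Set (Matrix (Fin 5) (Fin 5) ℂ)),
      ∀ B ∈ Submodule.span ℝ ({V0m, Vxm, Vym, V2m, V3m} : Set (Matrix (Fin 5) (Fin 5) ℂ)),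
        matBr A B ∈ Submodule.span ℝ ({V0m, Vxm, Vym, V2m, V3m} :
          Set (Matrix (Fin 5) (Fin 5) ℂ))) ∧
    Module.finrank ℝ
      ↥(Submodule.span ℝ ({V0m, Vxm, Vym, V2m, V3m} : Set (Matrix (Fin 5) (Fin 5) ℂ))) = 5 := by
  exact ⟨br0x, br0y, br02, br03, brClosure, hfr⟩
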